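/- For an odd prime p, natural numbers M ≥ 1 and 1 ≤ N ≤ p-1, and any j with 1 ≤ j ≤ p-1: the sum Σ_{k=0}^{MN} p(Mp, N, kp+j) equals (1/p)·[C(Mp+N, N) − 1]. -/

import Mathlib

/-- The number of partitions of n into at most N parts, each of size at most M. -/
def restrictedPartitions (M N n : ℕ) : ℕ :=
  ((Finset.univ : Finset (Fin N → Fin (M + 1))).filter
    (fun f => (∀ i j : Fin N, i ≤ j → (f j : ℕ) ≤ (f i : ℕ)) ∧
      ∑ i, (f i : ℕ) = n)).card

/-!
The partitions counted by `restrictedPartitions (M * p) N` have generating function the Gaussian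
binomial `G(z) = [Mp + N choose N]_z`. The two Pascal recurrences for Gaussian binomials give
`G(1) = C(Mp + N, N)` and, since `N < p`, `G(ζ) = 1` at every primitive `p`-th root of unity `ζ`.
Filtering the exponents `≡ j (mod p)` with `p⁻¹ ∑ₜ ζ^(-tj) G(ζ^t)` then yields
`(C(Mp + N, N) + ∑_{t ≠ 0} ζ^(-tj)) / p = (C(Mp + N, N) - 1) / p`.
-/

open Finset

theorem Fin.antitone_cons_top_iff {α : Type*} [Preorder α] [OrderTop α] {n : ℕ}
    {g : Fin n → α} : Antitone (Fin.cons ⊤ g : Fin (n + 1) → α) ↔ Antitone g := by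
  refine ⟨fun h i j hij => by simpa using h (Fin.succ_le_succ_iff.mpr hij), fun h i j hij => ?_⟩
  cases j using Fin.cases with
  | zero => rw [Fin.le_zero_iff.mp hij]
  | succ j =>
    cases i using Fin.cases with
    | zero => exact le_top
    | succ i => simpa using h (Fin.succ_le_succ_iff.mp hij)

theorem Fin.antitone_snoc_bot_iff {α : Type*} [Preorder α] [OrderBot α] {n : ℕ}
    {g : Fin n → α} : Antitone (Fin.snoc g ⊥ : Fin (n + 1) → α) ↔ Antitone g := by
  refine ⟨fun h i j hij => by simpa using h (Fin.castSucc_le_castSucc_iff.mpr hij),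
    fun h i j hij => ?_⟩
  cases j using Fin.lastCases with
  | last => simp
  | cast j =>
    cases i using Fin.lastCases with
    | last => exact absurd hij (not_le.mpr (Fin.castSucc_lt_last j))
    | cast i => simpa using h (Fin.castSucc_le_castSucc_iff.mp hij)

def antitoneTuples (M N : ℕ) : Finset (Fin N → Fin (M + 1)) := {f | Antitone f}

@[simp] theorem mem_antitoneTuples {M N : ℕ} {f : Fin N → Fin (M + 1)} :
    f ∈ antitoneTuples M N ↔ Antitone f := by
  simp [antitoneTuples]

theorem filter_antitoneTuples_head_eq_top (M N : ℕ) :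
    {f ∈ antitoneTuples (M + 1) (N + 1) | f 0 = ⊤} =
      (antitoneTuples (M + 1) N).map ⟨Fin.cons ⊤, Fin.cons_right_injective _⟩ := by
  ext f
  simp only [mem_filter, mem_antitoneTuples, mem_map, Function.Embedding.coeFn_mk]
  constructor
  · rintro ⟨hf, h0⟩
    have hcons : Fin.cons ⊤ (Fin.tail f) = f := h0 ▸ Fin.cons_self_tail f
    exact ⟨Fin.tail f, Fin.antitone_cons_top_iff.mp (hcons ▸ hf), hcons⟩
  · rintro ⟨g, hg, rfl⟩
    exact ⟨Fin.antitone_cons_top_iff.mpr hg, Fin.cons_zero _ _⟩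

theorem filter_antitoneTuples_head_ne_top (M N : ℕ) :
    {f ∈ antitoneTuples (M + 1) (N + 1) | f 0 ≠ ⊤} =
      (antitoneTuples M (N + 1)).map Fin.castSuccEmb.arrowCongrRight := by
  ext f
  simp only [mem_filter, mem_antitoneTuples, mem_map, Function.Embedding.arrowCongrRight_apply,
    Fin.coe_castSuccEmb]
  rw [Fin.top_eq_last]
  constructor
  · rintro ⟨hf, h0⟩
    have hlast (i : Fin (N + 1)) : f i ≠ Fin.last _ :=
      ((hf (Fin.zero_le i)).trans_lt (Fin.lt_last_iff_ne_last.mpr h0)).ne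
    refine ⟨fun i => (f i).castPred (hlast i), fun i j hij => ?_, ?_⟩
    · simpa [Fin.castPred_le_castPred_iff] using hf hij
    · ext i; simp
  · rintro ⟨g, hg, rfl⟩
    exact ⟨Fin.strictMono_castSucc.monotone.comp_antitone hg, Fin.castSucc_ne_last _⟩

theorem filter_antitoneTuples_last_eq_bot (M N : ℕ) :
    {f ∈ antitoneTuples (M + 1) (N + 1) | f (Fin.last N) = ⊥} =
      (antitoneTuples (M + 1) N).map ⟨(Fin.snoc · ⊥), Fin.snoc_left_injective _⟩ := by
  ext f
  simp only [mem_filter, mem_antitoneTuples, mem_map, Function.Embedding.coeFn_mk]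
  constructor
  · rintro ⟨hf, hlast⟩
    have hsnoc : Fin.snoc (Fin.init f) ⊥ = f := hlast ▸ Fin.snoc_init_self f
    exact ⟨Fin.init f, Fin.antitone_snoc_bot_iff.mp (by rwa [hsnoc]), hsnoc⟩
  · rintro ⟨g, hg, rfl⟩
    exact ⟨Fin.antitone_snoc_bot_iff.mpr hg, by simp⟩

theorem filter_antitoneTuples_last_ne_bot (M N : ℕ) :
    {f ∈ antitoneTuples (M + 1) (N + 1) | f (Fin.last N) ≠ ⊥} =
      (antitoneTuples M (N + 1)).map (Fin.succEmb _).arrowCongrRight := by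
  ext f
  simp only [mem_filter, mem_antitoneTuples, mem_map, Function.Embedding.arrowCongrRight_apply,
    Fin.coe_succEmb]
  rw [bot_eq_zero]
  constructor
  · rintro ⟨hf, hlast⟩
    have hzero (i : Fin (N + 1)) : f i ≠ 0 :=
      (Fin.pos_iff_ne_zero.mpr hlast |>.trans_le (hf (Fin.le_last i))).ne'
    refine ⟨fun i => (f i).pred (hzero i), fun i j hij => ?_, ?_⟩
    · simpa [Fin.pred_le_pred_iff] using hf hij
    · ext i; simp
  · rintro ⟨g, hg, rfl⟩
    exact ⟨Fin.strictMono_succ.monotone.comp_antitone hg, Fin.succ_ne_zero _⟩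

theorem sum_val_le_mul {M N : ℕ} (f : Fin N → Fin (M + 1)) : ∑ i, (f i : ℕ) ≤ N * M :=
  (sum_le_sum fun i _ => Fin.is_le (f i)).trans_eq (by simp)

theorem restrictedPartitions_eq_card (M N n : ℕ) :
    restrictedPartitions M N n = #{f ∈ antitoneTuples M N | ∑ i, (f i : ℕ) = n} := by
  rw [restrictedPartitions, antitoneTuples, filter_filter]
  rfl

section gaussBinom

variable {R : Type*} [CommSemiring R]

/-- The Gaussian binomial coefficient `[M + N choose N]_z`, as the generating function of the
partitions fitting in an `N × M` box. -/
def gaussBinom (M N : ℕ) (z : R) : R :=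
  ∑ f ∈ antitoneTuples M N, z ^ ∑ i, (f i : ℕ)

variable (M N : ℕ) (z : R)

theorem gaussBinom_zero_right : gaussBinom M 0 z = 1 := by
  rw [gaussBinom, antitoneTuples, filter_true_of_mem fun f _ => Subsingleton.antitone f]
  simp

theorem gaussBinom_zero_left : gaussBinom 0 N z = 1 := by
  rw [gaussBinom, antitoneTuples, filter_true_of_mem fun f _ =>
    show Antitone f from fun _ _ _ => by simp]
  simp

-- Split on whether the largest part is `M + 1`.
theorem gaussBinom_succ_succ :
    gaussBinom (M + 1) (N + 1) z =
      gaussBinom M (N + 1) z + z ^ (M + 1) * gaussBinom (M + 1) N z := by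
  rw [gaussBinom, ← sum_filter_not_add_sum_filter _ (fun f => f 0 = ⊤),
    filter_antitoneTuples_head_ne_top, filter_antitoneTuples_head_eq_top, sum_map, sum_map,
    gaussBinom, gaussBinom, mul_sum]
  congr 1
  refine sum_congr rfl fun g _ => ?_
  simp [Fin.sum_univ_succ, Fin.top_eq_last, pow_add]

-- Split on whether the smallest part is `0`; if not, remove the first column.
theorem gaussBinom_succ_succ' :
    gaussBinom (M + 1) (N + 1) z =
      gaussBinom (M + 1) N z + z ^ (N + 1) * gaussBinom M (N + 1) z := by
  rw [gaussBinom, ← sum_filter_add_sum_filter_not _ (fun f => f (Fin.last N) = ⊥),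
    filter_antitoneTuples_last_eq_bot, filter_antitoneTuples_last_ne_bot, sum_map, sum_map,
    gaussBinom, gaussBinom, mul_sum]
  congr 1 <;> refine sum_congr rfl fun g _ => ?_
  · simp [Fin.sum_univ_castSucc, bot_eq_zero]
  · simp [sum_add_distrib, pow_add, mul_comm]

theorem gaussBinom_one : gaussBinom M N (1 : R) = (M + N).choose N := by
  induction N generalizing M with
  | zero => simp [gaussBinom_zero_right]
  | succ N ihN =>
    induction M with
    | zero => simp [gaussBinom_zero_left]
    | succ M ihM =>
      rw [gaussBinom_succ_succ, ihM, ihN, one_pow, one_mul, ← Nat.cast_add,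
        show M + 1 + (N + 1) = M + N + 1 + 1 by ring, Nat.choose_succ_succ',
        show M + 1 + N = M + N + 1 by ring, show M + (N + 1) = M + N + 1 by ring, add_comm]

end gaussBinom

theorem one_sub_pow_mul_gaussBinom {R : Type*} [CommRing R] (M N : ℕ) (z : R) :
    (1 - z ^ (N + 1)) * gaussBinom M (N + 1) z = (1 - z ^ (M + 1)) * gaussBinom (M + 1) N z := by
  linear_combination gaussBinom_succ_succ' M N z - gaussBinom_succ_succ M N z

theorem Nat.dvd_add_sub_iff_mod_eq {p j : ℕ} (n : ℕ) (hj : j < p) :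
    p ∣ n + (p - j) ↔ n % p = j := by
  have hj0 : j + (p - j) ≡ 0 [MOD p] := by
    rw [Nat.add_sub_cancel' hj.le]
    exact Nat.modEq_zero_iff_dvd.mpr dvd_rfl
  rw [← Nat.modEq_zero_iff_dvd, ← Nat.mod_eq_of_lt hj, ← Nat.ModEq, Nat.mod_eq_of_lt hj]
  exact ⟨fun h => Nat.ModEq.add_right_cancel' _ (h.trans hj0.symm),
    fun h => (h.add_right _).trans hj0⟩

theorem Finset.card_filter_mod_eq_sum {ι : Type*} (s : Finset ι) (w : ι → ℕ) {p j K : ℕ}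
    (hj : j < p) (hw : ∀ i ∈ s, w i < K * p) :
    #{i ∈ s | w i % p = j} = ∑ k ∈ range K, #{i ∈ s | w i = k * p + j} := by
  rw [card_eq_sum_card_fiberwise (f := fun i => w i / p) (t := range K) fun i hi =>
    mem_range.mpr (Nat.div_lt_of_lt_mul (by simpa [mul_comm] using hw i (mem_filter.mp hi).1))]
  refine sum_congr rfl fun k _ => ?_
  rw [filter_filter]
  refine congrArg card (filter_congr fun i _ => ?_)
  rw [and_comm, Nat.div_mod_unique (by omega)]
  constructor
  · rintro ⟨h, -⟩; rw [← h]; ring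
  · intro h; exact ⟨by rw [h]; ring, hj⟩

namespace IsPrimitiveRoot

variable {R : Type*} [CommRing R] [IsDomain R] {ζ : R} {p : ℕ}

theorem sum_range_pow_mul (hζ : IsPrimitiveRoot ζ p) (k : ℕ) :
    ∑ t ∈ range p, ζ ^ (t * k) = if p ∣ k then (p : R) else 0 := by
  simp_rw [mul_comm _ k, pow_mul]
  split_ifs with hk
  · simp [(hζ.pow_eq_one_iff_dvd k).mpr hk]
  · have h1 : ζ ^ k ≠ 1 := fun h => hk ((hζ.pow_eq_one_iff_dvd k).mp h)
    refine (mul_eq_zero.mp ?_).resolve_right (sub_ne_zero.mpr h1)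
    rw [geom_sum_mul, ← pow_mul, mul_comm, pow_mul, hζ.pow_eq_one, one_pow, sub_self]

theorem sum_range_sum_pow_mul {ι : Type*} (hζ : IsPrimitiveRoot ζ p) (s : Finset ι)
    (w : ι → ℕ) : ∑ t ∈ range p, ∑ i ∈ s, ζ ^ (t * w i) = p * #{i ∈ s | p ∣ w i} := by
  rw [sum_comm]
  simp_rw [hζ.sum_range_pow_mul, sum_ite, sum_const_zero, add_zero, sum_const, nsmul_eq_mul,
    mul_comm]

theorem gaussBinom_eq_zero (hζ : IsPrimitiveRoot ζ p) {M N : ℕ} (hM : p ∣ M + 1)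
    (hN : ¬ p ∣ N + 1) : gaussBinom M (N + 1) ζ = 0 := by
  have h := one_sub_pow_mul_gaussBinom M N ζ
  rw [(hζ.pow_eq_one_iff_dvd _).mpr hM, sub_self, zero_mul] at h
  refine (mul_eq_zero.mp h).resolve_left (sub_ne_zero.mpr fun h1 => hN ?_)
  exact (hζ.pow_eq_one_iff_dvd _).mp h1.symm

theorem gaussBinom_eq_one (hζ : IsPrimitiveRoot ζ p) {K : ℕ} (hK : p ∣ K) :
    ∀ {N : ℕ}, N < p → gaussBinom K N ζ = 1
  | 0, _ => gaussBinom_zero_right K ζ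
  | N + 1, hN => by
    obtain _ | K := K
    · exact gaussBinom_zero_left _ ζ
    rw [gaussBinom_succ_succ, hζ.gaussBinom_eq_zero hK (Nat.not_dvd_of_pos_of_lt N.succ_pos hN),
      (hζ.pow_eq_one_iff_dvd _).mpr hK, gaussBinom_eq_one hζ hK (by omega), zero_add, one_mul]

theorem sum_pow_mul_gaussBinom (hζ : IsPrimitiveRoot ζ p) (M N r : ℕ) :
    ∑ t ∈ range p, ζ ^ (t * r) * gaussBinom M N (ζ ^ t) =
      p * #{f ∈ antitoneTuples M N | p ∣ ∑ i, (f i : ℕ) + r} := by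
  rw [← hζ.sum_range_sum_pow_mul]
  refine sum_congr rfl fun t _ => ?_
  simp_rw [gaussBinom, mul_sum, ← pow_mul, ← pow_add, mul_add, add_comm]

theorem sum_pow_mul_gaussBinom_eq_choose_sub_one (hp : p.Prime) (hζ : IsPrimitiveRoot ζ p)
    {K N r : ℕ} (hK : p ∣ K) (hN : N < p) (hr : ¬ p ∣ r) :
    ∑ t ∈ range p, ζ ^ (t * r) * gaussBinom K N (ζ ^ t) = (K + N).choose N - 1 := by
  have hroot (t : ℕ) (ht : t ∈ range p) (ht0 : t ≠ 0) : gaussBinom K N (ζ ^ t) = 1 := by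
    refine (hζ.pow_of_coprime t ?_).gaussBinom_eq_one hK hN
    exact (hp.coprime_iff_not_dvd.mpr
      (Nat.not_dvd_of_pos_of_lt (Nat.pos_of_ne_zero ht0) (mem_range.mp ht))).symm
  calc ∑ t ∈ range p, ζ ^ (t * r) * gaussBinom K N (ζ ^ t)
      = ∑ t ∈ range p, ζ ^ (t * r) +
          ∑ t ∈ range p, ζ ^ (t * r) * (gaussBinom K N (ζ ^ t) - 1) := by
        rw [← sum_add_distrib]
        exact sum_congr rfl fun t _ => by ring
    _ = 0 + ζ ^ (0 * r) * (gaussBinom K N (ζ ^ 0) - 1) := by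
        rw [hζ.sum_range_pow_mul, if_neg hr, sum_eq_single 0
          (fun t ht ht0 => by rw [hroot t ht ht0, sub_self, mul_zero])
          (fun h0 => absurd (mem_range.mpr hp.pos) h0)]
    _ = (K + N).choose N - 1 := by
        rw [zero_mul, pow_zero, one_mul, zero_add, gaussBinom_one]

end IsPrimitiveRoot

theorem sum_restrictedPartitions_nonzero_residue_general (p M N j : ℕ)
    (hp : p.Prime) (hN : N ≤ p - 1) (hj1 : 1 ≤ j) (hj : j ≤ p - 1) :
    p * ∑ k ∈ Finset.range (M * N + 1), restrictedPartitions (M * p) N (k * p + j)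
      = (M * p + N).choose N - 1 := by
  obtain ⟨ζ, hζ⟩ : ∃ ζ : ℂ, IsPrimitiveRoot ζ p := ⟨_, Complex.isPrimitiveRoot_exp p hp.ne_zero⟩
  have hbound (f) (_ : f ∈ antitoneTuples (M * p) N) : ∑ i, (f i : ℕ) < (M * N + 1) * p :=
    (sum_val_le_mul f).trans_lt (by nlinarith [hp.pos])
  have hcount : #{f ∈ antitoneTuples (M * p) N | p ∣ ∑ i, (f i : ℕ) + (p - j)} =
      ∑ k ∈ range (M * N + 1), restrictedPartitions (M * p) N (k * p + j) := by
    simp_rw [Nat.dvd_add_sub_iff_mod_eq _ (show j < p by omega),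
      card_filter_mod_eq_sum _ _ (show j < p by omega) hbound, restrictedPartitions_eq_card]
  have key := (hζ.sum_pow_mul_gaussBinom (M * p) N (p - j)).symm.trans
    (hζ.sum_pow_mul_gaussBinom_eq_choose_sub_one hp (dvd_mul_left p M) (by omega)
      (Nat.not_dvd_of_pos_of_lt (by omega) (by omega)))
  rw [hcount] at key
  have hC : 1 ≤ (M * p + N).choose N := Nat.choose_pos (Nat.le_add_left _ _)
  exact Nat.cast_injective (R := ℂ) (by rw [Nat.cast_sub hC]; exact_mod_cast key)

/-- For an odd prime p, M ≥ 1, 1 ≤ N ≤ p-1, 1 ≤ j ≤ p-1: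
∑_{k=0}^{MN} p(Mp, N, kp+j) = (C(Mp+N, N) − 1)/p. -/
theorem sum_restrictedPartitions_nonzero_residue (p M N j : ℕ)
    (hp : p.Prime) (hodd : Odd p) (hM : 1 ≤ M) (hN1 : 1 ≤ N) (hN : N ≤ p - 1)
    (hj1 : 1 ≤ j) (hj : j ≤ p - 1) :
    p * ∑ k ∈ Finset.range (M * N + 1), restrictedPartitions (M * p) N (k * p + j)
      = (M * p + N).choose N - 1 :=
  sum_restrictedPartitions_nonzero_residue_general p M N j hp hN hj1 hj
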